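/- arXiv:2409.02591 — 2 statements merged into one kernel-verified Lean document; each statement's English description precedes it below -/
import Mathlib

section
/- For every t in the open interval (-1,1), the principal value integral PV ∫_{-1}^{1} (1-s²)^{-1/2}/(t-s) ds equals 0. -/
/-!
With `A = √(1 - t²)`, the function
`F(s) = A⁻¹ (log (A √(1 - s²) + 1 - t s) - log |t - s|)`
is a primitive of `(1 - s²)^{-1/2} / (t - s)` on `(-1, 1) \ {t}` (it comes from the substitution
`s = cos θ`), and it vanishes at `s = ±1`. The integrand has a constant sign on either side of `t`,
so it is integrable there, and the truncated integral equals `F(t - ε) - F(t + ε)`. In this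
difference the singular terms `log |±ε|` cancel, leaving a continuous function of `ε` that
vanishes at `ε = 0`.
-/

open MeasureTheory Set Filter Real

theorem setOf_mem_Ioo_le_abs_sub_eq_union {a b t ε : ℝ} (ht : t ∈ Icc a b) (hε : 0 < ε) :
    {s ∈ Ioo a b | ε ≤ |s - t|} = Ioc a (t - ε) ∪ Ico (t + ε) b := by
  ext s
  simp only [mem_ofPred_eq, mem_Ioo, mem_union, mem_Ioc, mem_Ico, le_abs]
  constructor
  · rintro ⟨⟨has, hsb⟩, hright | hleft⟩
    · exact Or.inr ⟨by linarith, hsb⟩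
    · exact Or.inl ⟨has, by linarith⟩
  · rintro (⟨has, hst⟩ | ⟨hts, hsb⟩)
    · exact ⟨⟨has, by linarith [ht.2]⟩, Or.inr (by linarith)⟩
    · exact ⟨⟨by linarith [ht.1], hsb⟩, Or.inl (by linarith)⟩

theorem intervalIntegral.integrableOn_deriv_of_nonpos {g g' : ℝ → ℝ} {a b : ℝ}
    (hcont : ContinuousOn g (Icc a b)) (hderiv : ∀ x ∈ Ioo a b, HasDerivAt g (g' x) x)
    (g'neg : ∀ x ∈ Ioo a b, g' x ≤ 0) : IntegrableOn g' (Ioc a b) := by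
  simpa using (intervalIntegral.integrableOn_deriv_of_nonneg hcont.neg
    (fun x hx => (hderiv x hx).neg) (fun x hx => neg_nonneg.2 (g'neg x hx))).neg

theorem integral_Ioc_eq_sub_of_hasDerivAt {g g' : ℝ → ℝ} {a b : ℝ} (hab : a ≤ b)
    (hcont : ContinuousOn g (Icc a b)) (hderiv : ∀ x ∈ Ioo a b, HasDerivAt g (g' x) x)
    (hint : IntegrableOn g' (Ioc a b)) : ∫ x in Ioc a b, g' x = g b - g a := by
  rw [← intervalIntegral.integral_of_le hab]
  exact intervalIntegral.integral_eq_sub_of_hasDerivAt_of_le hab hcont hderiv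
    ((intervalIntegrable_iff_integrableOn_Ioc_of_le hab).2 hint)

namespace HilbertEquilibrium

variable (t : ℝ)

noncomputable def logArg (s : ℝ) : ℝ :=
  √(1 - t ^ 2) * √(1 - s ^ 2) + 1 - t * s

/-- `Real.log` is `log |·|`, so this is a primitive on both sides of `t`. -/
noncomputable def primitive (s : ℝ) : ℝ :=
  (√(1 - t ^ 2))⁻¹ * (log (logArg t s) - log (t - s))

theorem continuous_logArg : Continuous (logArg t) := by
  unfold logArg
  fun_prop

variable {t}

theorem logArg_pos {s : ℝ} (ht : t ∈ Ioo (-1 : ℝ) 1) (hs : s ∈ Icc (-1 : ℝ) 1) :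
    0 < logArg t s := by
  obtain ⟨ht₁, ht₂⟩ := ht
  obtain ⟨hs₁, hs₂⟩ := hs
  have hts : t * s < 1 := by
    nlinarith [mul_nonneg (by linarith : (0:ℝ) ≤ 1 - t) (by linarith : (0:ℝ) ≤ 1 + s),
      mul_nonneg (by linarith : (0:ℝ) ≤ 1 + t) (by linarith : (0:ℝ) ≤ 1 - s)]
  unfold logArg
  nlinarith [mul_nonneg (sqrt_nonneg (1 - t ^ 2)) (sqrt_nonneg (1 - s ^ 2))]

theorem hasDerivAt_primitive {s : ℝ} (ht : t ∈ Ioo (-1 : ℝ) 1) (hs : s ∈ Ioo (-1 : ℝ) 1)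
    (hst : s ≠ t) : HasDerivAt (primitive t) ((√(1 - s ^ 2))⁻¹ / (t - s)) s := by
  obtain ⟨ht₁, ht₂⟩ := ht
  obtain ⟨hs₁, hs₂⟩ := hs
  have hs_sq : 0 < 1 - s ^ 2 := by nlinarith
  have ht_sq : 0 < 1 - t ^ 2 := by nlinarith
  have hN : logArg t s ≠ 0 := (logArg_pos ⟨ht₁, ht₂⟩ ⟨hs₁.le, hs₂.le⟩).ne'
  have hts : t - s ≠ 0 := sub_ne_zero.2 hst.symm
  have hsqrt : HasDerivAt (fun x : ℝ => √(1 - x ^ 2)) (-(2 * s) / (2 * √(1 - s ^ 2))) s := by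
    have h : HasDerivAt (fun x : ℝ => 1 - x ^ 2) (-(2 * s)) s := by
      simpa using (hasDerivAt_pow 2 s).const_sub 1
    exact h.sqrt hs_sq.ne'
  have hlogArg : HasDerivAt (logArg t) (√(1 - t ^ 2) * (-(2 * s) / (2 * √(1 - s ^ 2))) - t) s := by
    have h := ((hsqrt.const_mul (√(1 - t ^ 2))).add_const 1).sub ((hasDerivAt_id s).const_mul t)
    rwa [mul_one] at h
  have hlog_sub : HasDerivAt (fun x : ℝ => log (t - x)) (-1 / (t - s)) s := by
    simpa using ((hasDerivAt_id s).const_sub t).log hts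
  refine (((hlogArg.log hN).sub hlog_sub).const_mul (√(1 - t ^ 2))⁻¹).congr_deriv ?_
  have hA : √(1 - t ^ 2) ^ 2 = 1 - t ^ 2 := sq_sqrt ht_sq.le
  have hB : √(1 - s ^ 2) ^ 2 = 1 - s ^ 2 := sq_sqrt hs_sq.le
  have hA₀ : √(1 - t ^ 2) ≠ 0 := (sqrt_pos.2 ht_sq).ne'
  have hB₀ : √(1 - s ^ 2) ≠ 0 := (sqrt_pos.2 hs_sq).ne'
  unfold logArg at hN ⊢
  field_simp
  linear_combination √(1 - t ^ 2) * hB - √(1 - s ^ 2) * hA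

theorem continuousOn_primitive {S : Set ℝ} (ht : t ∈ Ioo (-1 : ℝ) 1) (hS : S ⊆ Icc (-1 : ℝ) 1)
    (htS : t ∉ S) : ContinuousOn (primitive t) S := by
  refine continuousOn_const.mul (ContinuousOn.sub ?_ ?_)
  · exact (continuous_logArg t).continuousOn.log fun s hs => (logArg_pos ht (hS hs)).ne'
  · exact (continuous_const.sub continuous_id).continuousOn.log
      fun s hs => sub_ne_zero.2 (ne_of_mem_of_not_mem hs htS).symm

theorem primitive_neg_one : primitive t (-1) = 0 := by
  simp [primitive, logArg, add_comm]

theorem primitive_one : primitive t 1 = 0 := by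
  have hlog : log (t - 1) = log (1 - t) := by rw [← log_neg_eq_log, neg_sub]
  simp [primitive, logArg, hlog]

theorem primitive_sub_primitive (ε : ℝ) :
    primitive t (t - ε) - primitive t (t + ε) =
      (√(1 - t ^ 2))⁻¹ * (log (logArg t (t - ε)) - log (logArg t (t + ε))) := by
  simp only [primitive, sub_sub_cancel, sub_add_cancel_left, log_neg_eq_log]
  ring

theorem tendsto_primitive_sub_primitive (ht : t ∈ Ioo (-1 : ℝ) 1) :
    Tendsto (fun ε => primitive t (t - ε) - primitive t (t + ε)) (nhds 0) (nhds 0) := by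
  have hN : logArg t t ≠ 0 := (logArg_pos ht (Ioo_subset_Icc_self ht)).ne'
  have hcont : ContinuousAt
      (fun ε => (√(1 - t ^ 2))⁻¹ * (log (logArg t (t - ε)) - log (logArg t (t + ε)))) 0 := by
    refine continuousAt_const.mul (ContinuousAt.sub ?_ ?_) <;>
      refine ContinuousAt.log ((continuous_logArg t).continuousAt.comp (by fun_prop)) (by simpa)
  simpa [primitive_sub_primitive] using hcont.tendsto

theorem setIntegral_truncated_eq {ε : ℝ} (ht : t ∈ Ioo (-1 : ℝ) 1) (hε : 0 < ε)
    (hleft : -1 ≤ t - ε) (hright : t + ε ≤ 1) :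
    ∫ s in {s ∈ Ioo (-1 : ℝ) 1 | ε ≤ |s - t|}, (√(1 - s ^ 2))⁻¹ / (t - s) =
      primitive t (t - ε) - primitive t (t + ε) := by
  have hderiv : ∀ s ∈ Ioo (-1 : ℝ) 1, s ≠ t →
      HasDerivAt (primitive t) ((√(1 - s ^ 2))⁻¹ / (t - s)) s :=
    fun s hs hst => hasDerivAt_primitive ht hs hst
  have hcontL : ContinuousOn (primitive t) (Icc (-1) (t - ε)) :=
    continuousOn_primitive ht (Icc_subset_Icc le_rfl (by linarith [ht.2]))
      fun h => by linarith [h.2]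
  have hcontR : ContinuousOn (primitive t) (Icc (t + ε) 1) :=
    continuousOn_primitive ht (Icc_subset_Icc (by linarith [ht.1]) le_rfl)
      fun h => by linarith [h.1]
  have hderivL : ∀ s ∈ Ioo (-1) (t - ε),
      HasDerivAt (primitive t) ((√(1 - s ^ 2))⁻¹ / (t - s)) s :=
    fun s hs => hderiv s ⟨hs.1, by linarith [hs.2, ht.2]⟩ (by linarith [hs.2])
  have hderivR : ∀ s ∈ Ioo (t + ε) 1,
      HasDerivAt (primitive t) ((√(1 - s ^ 2))⁻¹ / (t - s)) s :=
    fun s hs => hderiv s ⟨by linarith [hs.1, ht.1], hs.2⟩ (by linarith [hs.1])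
  have hintL := intervalIntegral.integrableOn_deriv_of_nonneg hcontL hderivL
    fun s hs => div_nonneg (inv_nonneg.2 (sqrt_nonneg _)) (by linarith [hs.2])
  have hintR := intervalIntegral.integrableOn_deriv_of_nonpos hcontR hderivR
    fun s hs => div_nonpos_of_nonneg_of_nonpos (inv_nonneg.2 (sqrt_nonneg _)) (by linarith [hs.1])
  have hdisj : Disjoint (Ioc (-1) (t - ε)) (Ico (t + ε) 1) :=
    Set.disjoint_left.2 fun s hsL hsR => by linarith [hsL.2, hsR.1]
  rw [setOf_mem_Ioo_le_abs_sub_eq_union (Ioo_subset_Icc_self ht) hε,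
    setIntegral_union hdisj measurableSet_Ico hintL (hintR.congr_set_ae Ico_ae_eq_Ioc),
    setIntegral_congr_set Ico_ae_eq_Ioc,
    integral_Ioc_eq_sub_of_hasDerivAt hleft hcontL hderivL hintL,
    integral_Ioc_eq_sub_of_hasDerivAt hright hcontR hderivR hintR,
    primitive_neg_one, primitive_one]
  ring

end HilbertEquilibrium

open HilbertEquilibrium

/-- The equilibrium density `ρ(s) = (1-s²)^{-1/2}` on `(-1,1)` lies in the kernel of
the finite (principal-value) Hilbert transform: for every `t ∈ (-1,1)`,
`PV ∫_{-1}^1 (1-s²)^{-1/2}/(t-s) ds = 0`, where the principal value is the limit as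
`ε → 0⁺` of the integral over `{s ∈ (-1,1) : ε ≤ |s - t|}`. -/
theorem stmt_0 (t : ℝ) (ht : t ∈ Ioo (-1 : ℝ) 1) :
    Tendsto (fun ε : ℝ =>
        ∫ s in {s ∈ Ioo (-1 : ℝ) 1 | ε ≤ |s - t|}, (Real.sqrt (1 - s ^ 2))⁻¹ / (t - s))
      (nhdsWithin 0 (Ioi 0)) (nhds 0) := by
  refine ((tendsto_primitive_sub_primitive ht).mono_left nhdsWithin_le_nhds).congr' ?_
  have hsmall : Ioo 0 (min (1 + t) (1 - t)) ∈ nhdsWithin (0 : ℝ) (Ioi 0) :=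
    Ioo_mem_nhdsGT (lt_min (by linarith [ht.1]) (by linarith [ht.2]))
  filter_upwards [hsmall] with ε ⟨hε, hεt⟩
  exact (setIntegral_truncated_eq ht hε (by linarith [min_le_left (1 + t) (1 - t)])
    (by linarith [min_le_right (1 + t) (1 - t)])).symm
end

section
/- For every t in the closed interval [-1,1], the integral ∫_{-1}^{1} ln|t-s| · (1-s²)^{-1/2} ds equals -π·ln 2. -/
open MeasureTheory Set Real

/-! Substituting `s = cos θ` turns the weight `(1 - s²)^{-1/2} ds` into `dθ` on `(0, π)`.
Writing `t = cos φ`, the identity `cos φ - cos θ = 2 sin ((θ + φ)/2) sin ((θ - φ)/2)` splits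
`log |t - cos θ|` into `log 2` plus two integrals of `log |sin|` over intervals of length `π/2`;
by evenness of `log |sin|` they join into one interval of length `π`, and by `π`-periodicity
the integral over it is the classical `∫₀^π log (sin x) dx = -π log 2`. -/

lemma image_cos_Ioo_zero_pi : cos '' Ioo 0 π = Ioo (-1) 1 := by
  rw [continuous_cos.continuousOn.image_Ioo_of_strictAntiOn pi_pos.le strictAntiOn_cos,
    cos_pi, cos_zero]

theorem integral_Ioo_mul_inv_sqrt_one_sub_sq (f : ℝ → ℝ) :
    ∫ s in Ioo (-1 : ℝ) 1, f s * (√(1 - s ^ 2))⁻¹ = ∫ θ in 0..π, f (cos θ) := by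
  rw [← image_cos_Ioo_zero_pi,
    integral_image_eq_integral_abs_deriv_smul measurableSet_Ioo
      (fun θ _ => (hasDerivAt_cos θ).hasDerivWithinAt) (injOn_cos.mono Ioo_subset_Icc_self),
    intervalIntegral.integral_of_le pi_pos.le, integral_Ioc_eq_integral_Ioo]
  refine setIntegral_congr_fun measurableSet_Ioo fun θ hθ => ?_
  have hsin : 0 < sin θ := sin_pos_of_pos_of_lt_pi hθ.1 hθ.2
  rw [← sin_sq, sqrt_sq hsin.le, abs_neg, abs_of_pos hsin, smul_eq_mul]
  field_simp

-- `Real.log x = Real.log |x|`, so `log ∘ sin` is really `log |sin|`.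
lemma periodic_log_sin : Function.Periodic (fun x => log (sin x)) π := by
  intro x
  simp only [sin_add_pi, log_neg_eq_log]

lemma integral_log_sin_add_pi (c : ℝ) : ∫ x in c..c + π, log (sin x) = -π * log 2 := by
  rw [periodic_log_sin.intervalIntegral_add_eq c 0, zero_add, integral_log_sin_zero_pi]
  ring

lemma intervalIntegrable_log_sin_div_two_add (d a b : ℝ) :
    IntervalIntegrable (fun x => log (sin (x / 2 + d))) volume a b :=
  MeromorphicOn.intervalIntegrable_log (f := fun x => sin (x / 2 + d))
    (fun x _ => by fun_prop)

lemma ae_sin_div_two_add_ne_zero (d : ℝ) : ∀ᵐ x : ℝ, sin (x / 2 + d) ≠ 0 := by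
  refine ae_iff.2 (measure_mono_null (t := range fun n : ℤ => 2 * (n * π - d)) ?_
    ((countable_range _).measure_zero volume))
  intro x hx
  obtain ⟨n, hn⟩ := sin_eq_zero_iff.1 (not_not.1 hx)
  exact ⟨n, by linarith⟩

lemma integral_log_sin_div_two_add (d : ℝ) :
    ∫ θ in 0..π, log (sin (θ / 2 + d)) = 2 * ∫ x in d..d + π / 2, log (sin x) := by
  rw [intervalIntegral.integral_comp_div_add (fun x => log (sin x)) two_ne_zero, smul_eq_mul,
    zero_div, zero_add, add_comm]

lemma integral_log_sin_neg (a b : ℝ) : ∫ x in -b..-a, log (sin x) = ∫ x in a..b, log (sin x) := by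
  rw [← intervalIntegral.integral_comp_neg]
  simp only [sin_neg, log_neg_eq_log]

lemma cos_sub_cos_eq_two_mul_sin_mul_sin (φ θ : ℝ) :
    cos φ - cos θ = 2 * sin (θ / 2 + φ / 2) * sin (θ / 2 + -(φ / 2)) := by
  rw [cos_sub_cos, show (φ - θ) / 2 = -(θ / 2 + -(φ / 2)) by ring, sin_neg]
  ring_nf

theorem integral_log_abs_cos_sub_cos (φ : ℝ) :
    ∫ θ in 0..π, log |cos φ - cos θ| = -π * log 2 := by
  have hsplit : ∀ᵐ θ : ℝ, log |cos φ - cos θ|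
      = log 2 + log (sin (θ / 2 + φ / 2)) + log (sin (θ / 2 + -(φ / 2))) := by
    filter_upwards [ae_sin_div_two_add_ne_zero (φ / 2), ae_sin_div_two_add_ne_zero (-(φ / 2))]
      with θ hsum hdiff
    rw [log_abs, cos_sub_cos_eq_two_mul_sin_mul_sin, log_mul (by positivity) hdiff,
      log_mul two_ne_zero hsum]
  calc ∫ θ in 0..π, log |cos φ - cos θ|
      = ∫ θ in 0..π, (log 2 + log (sin (θ / 2 + φ / 2)) + log (sin (θ / 2 + -(φ / 2)))) :=
        intervalIntegral.integral_congr_ae (hsplit.mono fun _ h _ => h)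
    _ = π * log 2 + 2 * (∫ x in φ / 2 - π / 2..φ / 2, log (sin x))
          + 2 * ∫ x in φ / 2..φ / 2 - π / 2 + π, log (sin x) := by
        rw [intervalIntegral.integral_add (intervalIntegrable_const.add
            (intervalIntegrable_log_sin_div_two_add _ _ _))
            (intervalIntegrable_log_sin_div_two_add _ _ _),
          intervalIntegral.integral_add intervalIntegrable_const
            (intervalIntegrable_log_sin_div_two_add _ _ _),
          intervalIntegral.integral_const, integral_log_sin_div_two_add,
          integral_log_sin_div_two_add, show -(φ / 2) + π / 2 = -(φ / 2 - π / 2) by ring,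
          integral_log_sin_neg, show φ / 2 + π / 2 = φ / 2 - π / 2 + π by ring, smul_eq_mul,
          sub_zero]
        ring
    _ = -π * log 2 := by
        rw [add_assoc, ← mul_add, intervalIntegral.integral_add_adjacent_intervals
          (f := fun x => log (sin x)) intervalIntegrable_log_sin intervalIntegrable_log_sin,
          integral_log_sin_add_pi]
        ring

/-- The logarithmic potential of the equilibrium density `ρ(s) = (1-s²)^{-1/2}` is
constant on `[-1,1]`: for every `t ∈ [-1,1]`,
`∫_{-1}^1 ln|t-s| · (1-s²)^{-1/2} ds = -π ln 2`. -/
theorem stmt_1 (t : ℝ) (ht : t ∈ Icc (-1 : ℝ) 1) :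
    ∫ s in Ioo (-1 : ℝ) 1, Real.log |t - s| * (Real.sqrt (1 - s ^ 2))⁻¹
      = -π * Real.log 2 := by
  rw [integral_Ioo_mul_inv_sqrt_one_sub_sq (fun s => log |t - s|), ← cos_arccos ht.1 ht.2]
  exact integral_log_abs_cos_sub_cos _
end
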